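/- Let L be an unbounded hypernatural (L > n for all standard n), let n₀ be a standard natural number, and let f : {1,...,L} → *ℕ be internal strictly increasing with Σ_{m=1}^{L−1} f(m)/f(m+1) ≤ n₀. Then there exists m₀ with 1 ≤ m₀ < L such that f(m₀+1)/f(m₀) is unbounded (greater than every standard natural number). -/
import Mathlib


open Filter

/-- The hypernatural numbers: the ultrapower of ℕ by a nonprincipal ultrafilter on ℕ. -/
abbrev NStar : Type := Filter.Germ (Filter.hyperfilter ℕ : Filter ℕ) ℕ

private noncomputable def argmin (Ls : ℕ → ℕ) (F : ℕ → ℕ → ℕ) (i : ℕ) : ℕ :=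
  if h : 1 < Ls i then
    Classical.choose (Finset.exists_min_image (Finset.Ico 1 (Ls i))
      (fun m => (F i m : ℝ) / (F i (m + 1) : ℝ))
      ⟨1, Finset.mem_Ico.2 ⟨le_refl 1, h⟩⟩)
  else 1

private lemma argmin_spec (Ls : ℕ → ℕ) (F : ℕ → ℕ → ℕ) (i : ℕ) (h : 1 < Ls i) :
    argmin Ls F i ∈ Finset.Ico 1 (Ls i) ∧
    ∀ m ∈ Finset.Ico 1 (Ls i),
      (F i (argmin Ls F i) : ℝ) / (F i (argmin Ls F i + 1) : ℝ) ≤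
        (F i m : ℝ) / (F i (m + 1) : ℝ) := by
  unfold argmin
  rw [dif_pos h]
  exact Classical.choose_spec (Finset.exists_min_image (Finset.Ico 1 (Ls i))
      (fun m => (F i m : ℝ) / (F i (m + 1) : ℝ)) ⟨1, Finset.mem_Ico.2 ⟨le_refl 1, h⟩⟩)

/-- Let `L = [Ls]` be an unbounded hypernatural, `n₀` a standard natural number, and let
`f = [F]` be an internal strictly increasing sequence on `{1,...,L}` (internal objects
are represented by their sequences of standard approximations) whose internal sum
`Σ_{m=1}^{L−1} f(m)/f(m+1)` is at most `n₀`.  Then there exists `m₀ = [ms]` with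
`1 ≤ m₀ < L` such that `f(m₀+1)/f(m₀)` is unbounded (greater than every standard
natural number). -/
theorem exists_unbounded_jump (Ls : ℕ → ℕ) (F : ℕ → ℕ → ℕ) (n₀ : ℕ)
    (hL : ∀ n : ℕ, (n : NStar) < (↑Ls : NStar))
    (hpos : ∀ i, ∀ m, 1 ≤ m → m ≤ Ls i → 1 ≤ F i m)
    (hmono : ∀ i, ∀ m, 1 ≤ m → m < Ls i → F i m < F i (m + 1))
    (hsum : Hyperreal.ofSeq
        (fun i => ∑ m ∈ Finset.Ico 1 (Ls i), (F i m : ℝ) / (F i (m + 1) : ℝ)) ≤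
      (n₀ : Hyperreal)) :
    ∃ ms : ℕ → ℕ, (1 : NStar) ≤ (↑ms : NStar) ∧ (↑ms : NStar) < (↑Ls : NStar) ∧
      ∀ k : ℕ, (k : Hyperreal) <
        Hyperreal.ofSeq (fun i => (F i (ms i + 1) : ℝ) / (F i (ms i) : ℝ)) := by
  refine ⟨argmin Ls F, ?_, ?_, ?_⟩
  · -- 1 ≤ argmin
    have h1 : ((1 : ℕ) : NStar) < (↑Ls : NStar) := hL 1
    rw [show ((1 : NStar)) = ((fun _ => 1 : ℕ → ℕ) : NStar) from rfl]
    rw [Filter.Germ.coe_le]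
    have := Filter.Germ.coe_lt.1 h1
    filter_upwards [this] with i hi
    exact (Finset.mem_Ico.1 (argmin_spec Ls F i hi).1).1
  · have h1 : ((1 : ℕ) : NStar) < (↑Ls : NStar) := hL 1
    rw [Filter.Germ.coe_lt]
    have := Filter.Germ.coe_lt.1 h1
    filter_upwards [this] with i hi
    exact (Finset.mem_Ico.1 (argmin_spec Ls F i hi).1).2
  · intro k
    -- choose bound N
    have hLN : (((k * n₀ + 1 : ℕ)) : NStar) < (↑Ls : NStar) := hL (k * n₀ + 1)
    have hLN' := Filter.Germ.coe_lt.1 hLN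
    have hsum' : ∀ᶠ i in (Filter.hyperfilter ℕ : Filter ℕ),
        (∑ m ∈ Finset.Ico 1 (Ls i), (F i m : ℝ) / (F i (m + 1) : ℝ)) ≤ (n₀ : ℝ) := by
      have := hsum
      rw [show ((n₀ : Hyperreal)) = Hyperreal.ofSeq (fun _ => (n₀ : ℝ)) from rfl] at this
      exact Filter.Germ.coe_le.1 this
    rw [show ((k : Hyperreal)) = Hyperreal.ofSeq (fun _ => (k : ℝ)) from rfl,
      Hyperreal.ofSeq_lt_ofSeq]
    filter_upwards [hLN', hsum'] with i hi hs
    have hi : k * n₀ + 1 < Ls i := hi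
    -- pointwise argument
    have h1 : 1 < Ls i := lt_of_le_of_lt (by omega) hi
    obtain ⟨hmem, hmin⟩ := argmin_spec Ls F i h1
    set a := argmin Ls F i with ha
    obtain ⟨ha1, haL⟩ := Finset.mem_Ico.1 hmem
    have hFa : 1 ≤ F i a := hpos i a ha1 (le_of_lt haL)
    have hFa1 : 1 ≤ F i (a + 1) := hpos i (a + 1) (by omega) (by omega)
    have hApos : (0 : ℝ) < (F i a : ℝ) := by exact_mod_cast hFa
    have hBpos : (0 : ℝ) < (F i (a + 1) : ℝ) := by exact_mod_cast hFa1
    -- sum lower bound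
    have hcard : (Finset.Ico 1 (Ls i)).card = Ls i - 1 := by
      rw [Nat.card_Ico]
    have hlow : ((Ls i - 1 : ℕ) : ℝ) * ((F i a : ℝ) / (F i (a + 1) : ℝ)) ≤
        ∑ m ∈ Finset.Ico 1 (Ls i), (F i m : ℝ) / (F i (m + 1) : ℝ) := by
      calc ((Ls i - 1 : ℕ) : ℝ) * ((F i a : ℝ) / (F i (a + 1) : ℝ))
          = ∑ _m ∈ Finset.Ico 1 (Ls i), (F i a : ℝ) / (F i (a + 1) : ℝ) := by
            rw [Finset.sum_const, hcard, nsmul_eq_mul]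
        _ ≤ _ := Finset.sum_le_sum (fun m hm => hmin m hm)
    have hkey : ((Ls i - 1 : ℕ) : ℝ) * ((F i a : ℝ) / (F i (a + 1) : ℝ)) ≤ (n₀ : ℝ) :=
      le_trans hlow hs
    -- conclude k < F(a+1)/F(a)
    by_contra hcon
    push_neg at hcon
    -- then F(a+1) ≤ k * F(a)
    have hk0 : 0 < k := by
      by_contra hk
      push_neg at hk
      interval_cases k
      simp at hcon
      exact absurd (div_pos hBpos hApos) (not_lt.2 hcon)
    have hratio : (1 : ℝ) / (k : ℝ) ≤ (F i a : ℝ) / (F i (a + 1) : ℝ) := by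
      rw [div_le_div_iff₀ (by exact_mod_cast hk0) hBpos]
      have : (F i (a + 1) : ℝ) ≤ (k : ℝ) * (F i a : ℝ) := by
        calc (F i (a + 1) : ℝ) = ((F i (a + 1) : ℝ) / (F i a : ℝ)) * (F i a : ℝ) := by
              field_simp
          _ ≤ (k : ℝ) * (F i a : ℝ) := by
              apply mul_le_mul_of_nonneg_right hcon (le_of_lt hApos)
      linarith
    have hLi : ((k * n₀ + 1 : ℕ) : ℝ) ≤ ((Ls i - 1 : ℕ) : ℝ) := by
      have : k * n₀ + 1 ≤ Ls i - 1 := by omega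
      exact_mod_cast this
    have : ((k * n₀ + 1 : ℕ) : ℝ) * ((1 : ℝ) / (k : ℝ)) ≤ (n₀ : ℝ) := by
      calc ((k * n₀ + 1 : ℕ) : ℝ) * ((1 : ℝ) / (k : ℝ))
          ≤ ((Ls i - 1 : ℕ) : ℝ) * ((F i a : ℝ) / (F i (a + 1) : ℝ)) := by
            apply mul_le_mul hLi hratio (by positivity) (by positivity)
        _ ≤ (n₀ : ℝ) := hkey
    have hkR : (0 : ℝ) < (k : ℝ) := by exact_mod_cast hk0
    rw [mul_one_div, div_le_iff₀ hkR] at this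
    have hNle : k * n₀ + 1 ≤ n₀ * k := by exact_mod_cast this
    rw [Nat.mul_comm n₀ k] at hNle
    omega
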